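/- Let E be a real inner product space, let x₁, x₀, b, c ∈ E, set a := x₁ − x₀, and let τ > 0, τ' > 0. Then ⟨x₁ + γ₃·a − γ₂·b + γ₁·c, a⟩ ≥ (1/2)‖x₁‖² − (1/2)‖x₀‖² + ((1 + 2γ₃ − 2γ₂ − 2γ₁)/2)·‖a‖² + ((γ₂ + γ₁)/2)·(‖a‖² − ‖b‖²) + (γ₁/2)·(‖b‖² − ‖c‖²). (With x₁ = wⁿ⁺¹, x₀ = wⁿ, b = δwⁿ, c = δwⁿ⁻¹ this is the energy lower bound for the diffusion term a(ŵⁿ⁺¹, δwⁿ⁺¹) in the BDF2-TF stability proof.) -/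

import Mathlib

open scoped RealInnerProductSpace

/-- BDF2-TF γ-coefficients. -/
noncomputable def gamma3 (τ τ' : ℝ) : ℝ :=
  τ * τ' * (1 + τ) / ((1 + 2 * τ) * (1 + τ' * (1 + τ)))
noncomputable def gamma2 (τ τ' : ℝ) : ℝ :=
  τ ^ 2 * τ' * (1 + τ) * (1 + τ' * (2 + τ)) /
    ((1 + 2 * τ) * (1 + τ') * (1 + τ' * (1 + τ)))
noncomputable def gamma1 (τ τ' : ℝ) : ℝ :=
  τ ^ 2 * τ' ^ 3 * (1 + τ) ^ 2 / ((1 + 2 * τ) * (1 + τ') * (1 + τ' * (1 + τ)))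

/-!
Write `a = x₁ - x₀`. The polarization identity
`⟪x₁, a⟫ = (‖x₁‖² - ‖x₀‖² + ‖a‖²) / 2` produces the energy difference, and the two
cross terms are bounded by Young's inequality, `2 |⟪v, a⟫| ≤ ‖v‖² + ‖a‖²`, which needs only
`γ₂, γ₁ ≥ 0`; with these bounds the remaining terms match the right-hand side exactly.
-/

lemma gamma2_nonneg {τ τ' : ℝ} (hτ : 0 ≤ τ) (hτ' : 0 ≤ τ') : 0 ≤ gamma2 τ τ' := by
  unfold gamma2; positivity

lemma gamma1_nonneg {τ τ' : ℝ} (hτ : 0 ≤ τ) (hτ' : 0 ≤ τ') : 0 ≤ gamma1 τ τ' := by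
  unfold gamma1; positivity

section InnerProduct

variable {E : Type*} [NormedAddCommGroup E] [InnerProductSpace ℝ E]

lemma real_inner_self_sub_eq (x y : E) :
    ⟪x, x - y⟫ = (‖x‖ ^ 2 - ‖y‖ ^ 2 + ‖x - y‖ ^ 2) / 2 := by
  rw [norm_sub_sq_real, inner_sub_right, real_inner_self_eq_norm_sq]
  ring

lemma two_mul_real_inner_le_norm_sq_add_norm_sq (x y : E) :
    2 * ⟪x, y⟫ ≤ ‖x‖ ^ 2 + ‖y‖ ^ 2 := by
  linarith [norm_sub_sq_real x y, sq_nonneg ‖x - y‖]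

lemma neg_norm_sq_add_norm_sq_le_two_mul_real_inner (x y : E) :
    -(‖x‖ ^ 2 + ‖y‖ ^ 2) ≤ 2 * ⟪x, y⟫ := by
  linarith [norm_add_sq_real x y, sq_nonneg ‖x + y‖]

theorem real_inner_add_smul_sub_smul_add_smul_ge {g₃ g₂ g₁ : ℝ} (hg₂ : 0 ≤ g₂) (hg₁ : 0 ≤ g₁)
    (x₁ x₀ b c : E) :
    ⟪x₁ + g₃ • (x₁ - x₀) - g₂ • b + g₁ • c, x₁ - x₀⟫
      ≥ (1 / 2) * ‖x₁‖ ^ 2 - (1 / 2) * ‖x₀‖ ^ 2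
        + ((1 + 2 * g₃ - 2 * g₂ - 2 * g₁) / 2) * ‖x₁ - x₀‖ ^ 2
        + ((g₂ + g₁) / 2) * (‖x₁ - x₀‖ ^ 2 - ‖b‖ ^ 2)
        + (g₁ / 2) * (‖b‖ ^ 2 - ‖c‖ ^ 2) := by
  have hb := mul_le_mul_of_nonneg_left
    (two_mul_real_inner_le_norm_sq_add_norm_sq b (x₁ - x₀)) hg₂
  have hc := mul_le_mul_of_nonneg_left
    (neg_norm_sq_add_norm_sq_le_two_mul_real_inner c (x₁ - x₀)) hg₁
  have hx := real_inner_self_sub_eq x₁ x₀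
  set a := x₁ - x₀
  simp only [inner_add_left, inner_sub_left, real_inner_smul_left, real_inner_self_eq_norm_sq]
  linarith

end InnerProduct

/-- The energy lower bound for the diffusion term `a(ŵⁿ⁺¹, δwⁿ⁺¹)` in the
BDF2-TF stability proof. -/
theorem bdf2tf_diffusion_energy_lower_bound
    {E : Type*} [NormedAddCommGroup E] [InnerProductSpace ℝ E]
    (x1 x0 b c : E) (a : E) (ha : a = x1 - x0)
    (τ τ' : ℝ) (hτ : 0 < τ) (hτ' : 0 < τ') :
    ⟪x1 + gamma3 τ τ' • a - gamma2 τ τ' • b + gamma1 τ τ' • c, a⟫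
      ≥ (1 / 2) * ‖x1‖ ^ 2 - (1 / 2) * ‖x0‖ ^ 2
        + ((1 + 2 * gamma3 τ τ' - 2 * gamma2 τ τ' - 2 * gamma1 τ τ') / 2) * ‖a‖ ^ 2
        + ((gamma2 τ τ' + gamma1 τ τ') / 2) * (‖a‖ ^ 2 - ‖b‖ ^ 2)
        + (gamma1 τ τ' / 2) * (‖b‖ ^ 2 - ‖c‖ ^ 2) := by
  subst ha
  exact real_inner_add_smul_sub_smul_add_smul_ge
    (gamma2_nonneg hτ.le hτ'.le) (gamma1_nonneg hτ.le hτ'.le) x1 x0 b c
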